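/- arXiv:2010.06818 — 2 statements merged into one kernel-verified Lean document; each statement's English description precedes it below -/
import Mathlib

section
/- Let A be a real symmetric positive definite n×n matrix and B a real symmetric n×n matrix. Then the complex matrix A + iB is invertible. -/
/-!
If `(A + iB) z = 0`, then `0 = re (z* (A + iB) z) = re (z* A z) - im (z* B z)`. The second term
vanishes because `B` is Hermitian, and the first is positive for `z ≠ 0` because `A`, viewed as a
complex matrix, is still positive definite: for `z = x + iy` one has `re (z* A z) = xᵀAx + yᵀAy`.
-/

open Matrix Complex

noncomputable def cpx {m n : Type*} (M : Matrix m n ℝ) : Matrix m n ℂ :=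
  M.map (fun x => (x : ℂ))

open scoped ComplexOrder

namespace Matrix

variable {n : Type*}

theorem PosDef.isUnit_add_I_smul [Fintype n] [DecidableEq n] {𝕜 : Type*} [RCLike 𝕜]
    {P Q : Matrix n n 𝕜} (hP : P.PosDef) (hQ : Q.IsHermitian) :
    IsUnit (P + (RCLike.I : 𝕜) • Q) := by
  rw [isUnit_iff_isUnit_det, isUnit_iff_ne_zero, Ne, ← exists_mulVec_eq_zero_iff]
  rintro ⟨z, hz0, hz⟩
  have hre : RCLike.re (star z ⬝ᵥ (P + (RCLike.I : 𝕜) • Q) *ᵥ z) =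
      RCLike.re (star z ⬝ᵥ P *ᵥ z) := by
    simp [add_mulVec, smul_mulVec, hQ.im_star_dotProduct_mulVec_self]
  rw [hz, dotProduct_zero, map_zero] at hre
  exact (hP.re_dotProduct_pos hz0).ne hre

theorem IsSymm.cpx_isHermitian {M : Matrix n n ℝ} (hM : M.IsSymm) : (cpx M).IsHermitian :=
  (isHermitian_iff_isSymm.mpr hM).map _ fun x => (conj_ofReal x).symm

theorem re_star_dotProduct_cpx_mulVec [Fintype n] (M : Matrix n n ℝ) (z : n → ℂ) :
    (star z ⬝ᵥ cpx M *ᵥ z).re =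
      (fun i => (z i).re) ⬝ᵥ M *ᵥ (fun i => (z i).re) +
        (fun i => (z i).im) ⬝ᵥ M *ᵥ (fun i => (z i).im) := by
  simp only [dotProduct, mulVec, cpx, map_apply, Finset.mul_sum, ← Finset.sum_add_distrib, re_sum]
  refine Finset.sum_congr rfl fun i _ => Finset.sum_congr rfl fun j _ => ?_
  simp

theorem PosDef.re_star_dotProduct_cpx_mulVec_pos [Fintype n] {M : Matrix n n ℝ} (hM : M.PosDef)
    {z : n → ℂ} (hz : z ≠ 0) : 0 < (star z ⬝ᵥ cpx M *ᵥ z).re := by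
  have hpos : ∀ x : n → ℝ, x ≠ 0 → 0 < x ⬝ᵥ M *ᵥ x := fun _ hx => by
    simpa using hM.dotProduct_mulVec_pos hx
  have hnn : ∀ x : n → ℝ, 0 ≤ x ⬝ᵥ M *ᵥ x := fun x => by
    simpa using hM.posSemidef.dotProduct_mulVec_nonneg x
  rw [re_star_dotProduct_cpx_mulVec]
  by_cases hx : (fun i => (z i).re) = 0
  · have hy : (fun i => (z i).im) ≠ 0 := fun hy =>
      hz (funext fun i => Complex.ext (congrFun hx i) (congrFun hy i))
    exact add_pos_of_nonneg_of_pos (hnn _) (hpos _ hy)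
  · exact add_pos_of_pos_of_nonneg (hpos _ hx) (hnn _)

theorem PosDef.cpx [Fintype n] {M : Matrix n n ℝ} (hM : M.PosDef) : (_root_.cpx M).PosDef :=
  have hH := IsSymm.cpx_isHermitian hM.isHermitian
  .of_dotProduct_mulVec_pos hH fun _ hz =>
    RCLike.pos_iff.mpr ⟨hM.re_star_dotProduct_cpx_mulVec_pos hz, hH.im_star_dotProduct_mulVec_self _⟩

end Matrix

/-- If `A` is real symmetric positive definite and `B` is real symmetric, then
the complex matrix `A + iB` is invertible. -/
theorem stmt0 {n : ℕ} (A B : Matrix (Fin n) (Fin n) ℝ)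
    (hA : A.PosDef) (hB : B.IsSymm) :
    IsUnit (cpx A + Complex.I • cpx B) :=
  hA.cpx.isUnit_add_I_smul hB.cpx_isHermitian
end

section
/- Suppose A and B are real symmetric positive definite n×n matrices and a ≥ 0, b ∈ ℝ. Then the complex matrix A + aB + ibB is invertible and there exists a constant C depending only on A and B (not on a, b) such that the operator norm of (A + aB + ibB)^{-1} is at most C. -/
/-!
For `M = A + (a + i b) B` and `a ≥ 0`, the real part of `⟪M x, x⟫` is
`⟪A x, x⟫ + a ⟪B x, x⟫ ≥ ⟪A x, x⟫ ≥ c ‖x‖²`, where `c > 0` is the minimum of the positive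
continuous function `x ↦ ⟪A x, x⟫` on the (compact) unit sphere. By Cauchy–Schwarz
`c ‖x‖ ≤ ‖M x‖`, so `M` is injective, hence invertible, and `‖M⁻¹‖ ≤ c⁻¹` whatever `a` and `b`.
-/

open Matrix Complex
open scoped Matrix.Norms.L2Operator

open scoped ComplexOrder

namespace ContinuousLinearMap

variable {𝕜 E : Type*} [RCLike 𝕜] [NormedAddCommGroup E] [InnerProductSpace 𝕜 E]

theorem mul_norm_le_norm_apply_of_mul_norm_sq_le {T : E →L[𝕜] E} {c : ℝ}
    (hT : ∀ x, c * ‖x‖ ^ 2 ≤ T.reApplyInnerSelf x) (x : E) : c * ‖x‖ ≤ ‖T x‖ := by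
  rcases eq_or_ne x 0 with rfl | hx
  · simp
  refine le_of_mul_le_mul_left ?_ (norm_pos_iff.mpr hx)
  calc ‖x‖ * (c * ‖x‖) = c * ‖x‖ ^ 2 := by ring
    _ ≤ T.reApplyInnerSelf x := hT x
    _ ≤ ‖T x‖ * ‖x‖ := re_inner_le_norm _ _
    _ = ‖x‖ * ‖T x‖ := mul_comm _ _

theorem reApplyInnerSelf_le_add_smul (T : E →L[𝕜] E) {S : E →L[𝕜] E}
    (hS : ∀ x, 0 ≤ inner 𝕜 (S x) x) {z : 𝕜} (hz : 0 ≤ RCLike.re z) (x : E) :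
    T.reApplyInnerSelf x ≤ (T + z • S).reApplyInnerSelf x := by
  obtain ⟨hre, him⟩ := RCLike.nonneg_iff.mp (hS x)
  rw [reApplyInnerSelf_apply, reApplyInnerSelf_apply, _root_.add_apply, _root_.smul_apply,
    inner_add_left, inner_smul_left, map_add, RCLike.mul_re, him, mul_zero, sub_zero,
    RCLike.conj_re]
  exact le_add_of_nonneg_right (mul_nonneg hz hre)

theorem exists_pos_mul_norm_sq_le_reApplyInnerSelf [ProperSpace E] (T : E →L[𝕜] E)
    (hT : ∀ x ≠ 0, 0 < T.reApplyInnerSelf x) :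
    ∃ c > 0, ∀ x, c * ‖x‖ ^ 2 ≤ T.reApplyInnerSelf x := by
  rcases subsingleton_or_nontrivial E with hE | hE
  · exact ⟨1, one_pos, fun x => by simp [Subsingleton.elim x 0, reApplyInnerSelf_apply]⟩
  obtain ⟨x₀, hx₀, hmin⟩ := (isCompact_sphere (0 : E) 1).exists_isMinOn
    (Set.nonempty_coe_sort.mp (NormedSpace.sphere_nonempty_rclike 𝕜 zero_le_one))
    T.reApplyInnerSelf_continuous.continuousOn
  refine ⟨_, hT x₀ (ne_zero_of_mem_unit_sphere ⟨x₀, hx₀⟩), fun x => ?_⟩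
  rcases eq_or_ne x 0 with rfl | hx
  · simp [reApplyInnerSelf_apply]
  have hnorm : ‖x‖ ≠ 0 := norm_ne_zero_iff.mpr hx
  have hu : (‖x‖⁻¹ : 𝕜) • x ∈ Metric.sphere (0 : E) 1 := by simp [norm_smul, hnorm]
  calc T.reApplyInnerSelf x₀ * ‖x‖ ^ 2
      ≤ T.reApplyInnerSelf ((‖x‖⁻¹ : 𝕜) • x) * ‖x‖ ^ 2 := by gcongr; exact hmin hu
    _ = T.reApplyInnerSelf x := by
      rw [reApplyInnerSelf_smul, mul_comm, ← mul_assoc, norm_inv, RCLike.norm_ofReal, abs_norm,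
        ← mul_pow, mul_inv_cancel₀ hnorm, one_pow, one_mul]

end ContinuousLinearMap

namespace Matrix

variable {𝕜 n : Type*} [RCLike 𝕜] [Fintype n] [DecidableEq n]

open scoped MatrixOrder in
theorem PosDef.map_algebraMap {A : Matrix n n ℝ} (hA : A.PosDef) :
    (A.map (algebraMap ℝ 𝕜)).PosDef := by
  obtain ⟨R, rfl⟩ := CStarAlgebra.nonneg_iff_eq_star_mul_self.mp hA.posSemidef.nonneg
  refine (PosSemidef.posDef_iff_isUnit ?_).mpr (hA.isUnit.map (algebraMap ℝ 𝕜).mapMatrix)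
  rw [star_eq_conjTranspose, Matrix.map_mul, conjTranspose_map _ (fun _ => by simp)]
  exact posSemidef_conjTranspose_mul_self _

theorem PosDef.reApplyInnerSelf_toEuclideanCLM_pos {P : Matrix n n 𝕜} (hP : P.PosDef)
    {x : EuclideanSpace 𝕜 n} (hx : x ≠ 0) :
    0 < (toEuclideanCLM (𝕜 := 𝕜) P).reApplyInnerSelf x := by
  rw [ContinuousLinearMap.reApplyInnerSelf_apply, inner_re_symm,
    EuclideanSpace.inner_eq_star_dotProduct, dotProduct_comm]
  exact hP.re_dotProduct_pos (x := x.ofLp) (by simpa using hx)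

theorem PosSemidef.inner_toEuclideanCLM_nonneg {P : Matrix n n 𝕜} (hP : P.PosSemidef)
    (x : EuclideanSpace 𝕜 n) : 0 ≤ inner 𝕜 (toEuclideanCLM (𝕜 := 𝕜) P x) x :=
  (isPositive_toEuclideanLin_iff.mpr hP).inner_nonneg_left x

theorem isUnit_of_mul_norm_le {M : Matrix n n 𝕜} {c : ℝ} (hc : 0 < c)
    (hM : ∀ x, c * ‖x‖ ≤ ‖toEuclideanCLM (𝕜 := 𝕜) M x‖) : IsUnit M := by
  refine mulVec_injective_iff_isUnit.mp fun u v huv => ?_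
  have h := hM (WithLp.toLp 2 (u - v))
  rw [toEuclideanCLM_toLp, mulVec_sub, huv, sub_self, WithLp.toLp_zero, norm_zero] at h
  have h0 : ‖WithLp.toLp 2 (u - v)‖ ≤ 0 := le_of_mul_le_mul_left (by simpa using h) hc
  simpa [sub_eq_zero] using h0

theorem norm_nonsing_inv_le {M : Matrix n n 𝕜} {c : ℝ} (hc : 0 < c)
    (hM : ∀ x, c * ‖x‖ ≤ ‖toEuclideanCLM (𝕜 := 𝕜) M x‖) : ‖M⁻¹‖ ≤ c⁻¹ := by
  have hdet := (isUnit_iff_isUnit_det M).mp (isUnit_of_mul_norm_le hc hM)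
  have hinv : ∀ y, toEuclideanCLM (𝕜 := 𝕜) M (toEuclideanCLM (𝕜 := 𝕜) M⁻¹ y) = y := fun y => by
    ext i
    simp [ofLp_toEuclideanCLM, mulVec_mulVec, mul_nonsing_inv M hdet]
  rw [cstar_norm_def]
  refine ContinuousLinearMap.opNorm_le_bound _ (inv_nonneg.mpr hc.le) fun y => ?_
  rw [inv_mul_eq_div, le_div_iff₀' hc]
  simpa [hinv] using hM (toEuclideanCLM (𝕜 := 𝕜) M⁻¹ y)

end Matrix

/-- If `A` and `B` are real symmetric positive definite, then for all `a ≥ 0` and real `b`,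
the matrix `A + aB + ibB` is invertible and the operator norm of its inverse is bounded by a
constant `C` independent of `a` and `b`. -/
theorem stmt3 {n : ℕ} (A B : Matrix (Fin n) (Fin n) ℝ) (hA : A.PosDef) (hB : B.PosDef) :
    ∃ C : ℝ, ∀ a b : ℝ, 0 ≤ a →
      IsUnit (cpx A + (a : ℂ) • cpx B + (Complex.I * b) • cpx B) ∧
      ‖(cpx A + (a : ℂ) • cpx B + (Complex.I * b) • cpx B)⁻¹‖ ≤ C := by
  set K := toEuclideanCLM (n := Fin n) (𝕜 := ℂ)
  have hA' : (cpx A).PosDef := hA.map_algebraMap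
  have hB' : (cpx B).PosSemidef := hB.map_algebraMap.posSemidef
  obtain ⟨c, hc, hcA⟩ := (K (cpx A)).exists_pos_mul_norm_sq_le_reApplyInnerSelf
    fun x hx => hA'.reApplyInnerSelf_toEuclideanCLM_pos hx
  refine ⟨c⁻¹, fun a b ha => ?_⟩
  rw [add_assoc, ← add_smul]
  have hbelow : ∀ x, c * ‖x‖ ≤ ‖K (cpx A + ((a : ℂ) + I * b) • cpx B) x‖ := by
    refine ContinuousLinearMap.mul_norm_le_norm_apply_of_mul_norm_sq_le fun x => (hcA x).trans ?_
    rw [map_add, map_smul]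
    exact (K (cpx A)).reApplyInnerSelf_le_add_smul hB'.inner_toEuclideanCLM_nonneg (by simpa) x
  exact ⟨isUnit_of_mul_norm_le hc hbelow, norm_nonsing_inv_le hc hbelow⟩
end
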